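/- arXiv:2407.11397 — 2 statements merged into one kernel-verified Lean document; each statement's English description precedes it below -/
import Mathlib

section
/- Let ε' = A_c ε + k·δy + θ(ψ(y) - ψ(ȳⱼ)) + A_c·δξ + θ·A_c·δζ where A_c is Hurwitz with PA_c + A_cᵀP = -I (P symmetric positive definite), |θ| ≤ θ̄, ψ : ℝ → ℝⁿ is L-Lipschitz (componentwise with ‖ψ(y)-ψ(y*)‖ ≤ L|y - y*|), |δy| ≤ γ̃_y, |y - ȳⱼ| ≤ γ̃_y, ‖δξ‖ ≤ γ_ξ, ‖δζ‖ ≤ γ_ζ. Then V = εᵀPε satisfies V' ≤ -(1 - 4σ)‖ε‖² + d_ε for any σ > 0, with d_ε = ‖P‖²[(‖k‖² + θ̄²L²)γ̃_y² + (γ_ξ² + θ̄²γ_ζ²)‖A_c‖²]/σ. -/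
open scoped RealInnerProductSpace

/-- Full observer-error estimate (eqs. 14–23): with
`ε' = A_c ε + k δy + θ(ψ(y) - ψ(ȳⱼ)) + A_c δξ + θ A_c δζ` and the sampling
perturbations bounded by the triggering thresholds, `V = εᵀPε` satisfies
`V' ≤ -(1 - 4σ)‖ε‖² + d_ε`. -/
theorem stmt_18 (n : ℕ) (Ac P : Matrix (Fin n) (Fin n) ℝ)
    (AcL PL : EuclideanSpace ℝ (Fin n) →L[ℝ] EuclideanSpace ℝ (Fin n))
    (hAcL : AcL = Matrix.toEuclideanCLM (𝕜 := ℝ) Ac)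
    (hPL : PL = Matrix.toEuclideanCLM (𝕜 := ℝ) P)
    (hHurwitz : ∀ μ ∈ spectrum ℂ (Ac.map Complex.ofReal), μ.re < 0)
    (hPsymm : P.IsSymm) (hP : P.PosDef)
    (hLyap : P * Ac + Ac.transpose * P = -1)
    (ψ : ℝ → EuclideanSpace ℝ (Fin n)) (L : ℝ)
    (hLip : ∀ a b : ℝ, ‖ψ a - ψ b‖ ≤ L * |a - b|)
    (k : EuclideanSpace ℝ (Fin n)) (θ θbar : ℝ) (hθ : |θ| ≤ θbar)
    (ε δξ δζ : ℝ → EuclideanSpace ℝ (Fin n)) (y δy ybarj : ℝ → ℝ)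
    (γty γξ γζ σ : ℝ) (hσ : 0 < σ)
    (hδy : ∀ t : ℝ, |δy t| ≤ γty) (hy : ∀ t : ℝ, |y t - ybarj t| ≤ γty)
    (hδξ : ∀ t : ℝ, ‖δξ t‖ ≤ γξ) (hδζ : ∀ t : ℝ, ‖δζ t‖ ≤ γζ)
    (hode : ∀ t : ℝ, HasDerivAt ε
      (AcL (ε t) + δy t • k + θ • (ψ (y t) - ψ (ybarj t))
        + AcL (δξ t) + θ • AcL (δζ t)) t) :
    ∀ t : ℝ, deriv (fun s => ⟪ε s, PL (ε s)⟫) t ≤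
      -(1 - 4 * σ) * ‖ε t‖ ^ 2
        + ‖PL‖ ^ 2 * ((‖k‖ ^ 2 + θbar ^ 2 * L ^ 2) * γty ^ 2
            + (γξ ^ 2 + θbar ^ 2 * γζ ^ 2) * ‖AcL‖ ^ 2) / σ := by
  intro t
  have hθbar : 0 ≤ θbar := (abs_nonneg θ).trans hθ
  have hγty : 0 ≤ γty := (abs_nonneg _).trans (hδy 0)
  have hγξ : 0 ≤ γξ := (norm_nonneg _).trans (hδξ 0)
  have hγζ : 0 ≤ γζ := (norm_nonneg _).trans (hδζ 0)
  have hL : 0 ≤ L := by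
    have h := hLip 0 1
    have h0 := norm_nonneg (ψ 0 - ψ 1)
    simp only [zero_sub, abs_neg, abs_one, mul_one] at h
    linarith
  have hPstar : star P = P := by
    rw [Matrix.star_eq_conjTranspose]
    ext i j
    simp [Matrix.conjTranspose_apply, hPsymm.apply]
  have hPadj : ContinuousLinearMap.adjoint PL = PL := by
    rw [← ContinuousLinearMap.star_eq_adjoint, hPL, ← map_star, hPstar]
  have hself : ∀ x w : EuclideanSpace ℝ (Fin n), ⟪x, PL w⟫ = ⟪PL x, w⟫ := by
    intro x w
    conv_rhs => rw [← hPadj]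
    exact (ContinuousLinearMap.adjoint_inner_left PL w x).symm
  have hAcstar : star Ac = Ac.transpose := by
    rw [Matrix.star_eq_conjTranspose]
    ext i j
    simp [Matrix.conjTranspose_apply]
  have hAcadj : ContinuousLinearMap.adjoint AcL
      = Matrix.toEuclideanCLM (𝕜 := ℝ) Ac.transpose := by
    rw [← ContinuousLinearMap.star_eq_adjoint, hAcL, ← map_star, hAcstar]
  set e := ε t with he
  have hkey : ⟪e, PL (AcL e)⟫ + ⟪AcL e, PL e⟫ = -‖e‖ ^ 2 := by
    have h1 : ⟪AcL e, PL e⟫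
        = ⟪e, (Matrix.toEuclideanCLM (𝕜 := ℝ) Ac.transpose) (PL e)⟫ := by
      rw [← hAcadj, ContinuousLinearMap.adjoint_inner_right]
    have h2 : ⟪e, PL (AcL e)⟫ + ⟪e, (Matrix.toEuclideanCLM (𝕜 := ℝ) Ac.transpose) (PL e)⟫
        = ⟪e, (Matrix.toEuclideanCLM (𝕜 := ℝ) (P * Ac + Ac.transpose * P)) e⟫ := by
      rw [← inner_add_right]
      congr 1
      rw [map_add, map_mul, map_mul, hAcL, hPL]
      rfl
    rw [h1, h2, hLyap, map_neg, map_one]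
    simp only [ContinuousLinearMap.neg_apply, ContinuousLinearMap.one_apply, inner_neg_right]
    rw [real_inner_self_eq_norm_sq]
  have young : ∀ (w : EuclideanSpace ℝ (Fin n)) (c : ℝ), ‖w‖ ≤ c →
      2 * ⟪e, PL w⟫ ≤ σ * ‖e‖ ^ 2 + ‖PL‖ ^ 2 * c ^ 2 / σ := by
    intro w c hw
    have h1 : ⟪e, PL w⟫ ≤ ‖e‖ * (‖PL‖ * c) := by
      refine (real_inner_le_norm _ _).trans ?_
      have h2 : ‖PL w‖ ≤ ‖PL‖ * c :=
        (PL.le_opNorm w).trans (mul_le_mul_of_nonneg_left hw (norm_nonneg PL))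
      exact mul_le_mul_of_nonneg_left h2 (norm_nonneg e)
    have h5 : (2 * ⟪e, PL w⟫ - σ * ‖e‖ ^ 2) * σ ≤ (‖PL‖ * c) ^ 2 := by
      nlinarith [sq_nonneg (σ * ‖e‖ - ‖PL‖ * c), hσ, h1]
    have h6 : 2 * ⟪e, PL w⟫ - σ * ‖e‖ ^ 2 ≤ (‖PL‖ * c) ^ 2 / σ :=
      (le_div_iff₀ hσ).mpr h5
    have h7 : (‖PL‖ * c) ^ 2 / σ = ‖PL‖ ^ 2 * c ^ 2 / σ := by ring
    linarith
  have hb1 : ‖δy t • k‖ ≤ γty * ‖k‖ := by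
    rw [norm_smul, Real.norm_eq_abs]
    exact mul_le_mul_of_nonneg_right (hδy t) (norm_nonneg k)
  have hb2 : ‖θ • (ψ (y t) - ψ (ybarj t))‖ ≤ θbar * (L * γty) := by
    rw [norm_smul, Real.norm_eq_abs]
    have h2 : ‖ψ (y t) - ψ (ybarj t)‖ ≤ L * γty :=
      (hLip _ _).trans (mul_le_mul_of_nonneg_left (hy t) hL)
    exact mul_le_mul hθ h2 (norm_nonneg _) hθbar
  have hb3 : ‖AcL (δξ t)‖ ≤ ‖AcL‖ * γξ :=
    (AcL.le_opNorm _).trans (mul_le_mul_of_nonneg_left (hδξ t) (norm_nonneg AcL))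
  have hb4 : ‖θ • AcL (δζ t)‖ ≤ θbar * (‖AcL‖ * γζ) := by
    rw [norm_smul, Real.norm_eq_abs]
    have h2 : ‖AcL (δζ t)‖ ≤ ‖AcL‖ * γζ :=
      (AcL.le_opNorm _).trans (mul_le_mul_of_nonneg_left (hδζ t) (norm_nonneg AcL))
    exact mul_le_mul hθ h2 (norm_nonneg _) hθbar
  have y1 := young _ _ hb1
  have y2 := young _ _ hb2
  have y3 := young _ _ hb3
  have y4 := young _ _ hb4
  have hPe : HasDerivAt (fun s => PL (ε s))
      (PL (AcL (ε t) + δy t • k + θ • (ψ (y t) - ψ (ybarj t))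
        + AcL (δξ t) + θ • AcL (δζ t))) t :=
    PL.hasFDerivAt.comp_hasDerivAt t (hode t)
  have hV := (hode t).inner ℝ hPe
  rw [hV.deriv]
  have hexp : ⟪ε t, PL (AcL (ε t) + δy t • k + θ • (ψ (y t) - ψ (ybarj t))
        + AcL (δξ t) + θ • AcL (δζ t))⟫
      + ⟪AcL (ε t) + δy t • k + θ • (ψ (y t) - ψ (ybarj t))
        + AcL (δξ t) + θ • AcL (δζ t), PL (ε t)⟫
      = (⟪e, PL (AcL e)⟫ + ⟪AcL e, PL e⟫)
        + 2 * ⟪e, PL (δy t • k)⟫ + 2 * ⟪e, PL (θ • (ψ (y t) - ψ (ybarj t)))⟫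
        + 2 * ⟪e, PL (AcL (δξ t))⟫ + 2 * ⟪e, PL (θ • AcL (δζ t))⟫ := by
    simp only [map_add, inner_add_right, inner_add_left, ← he]
    have c1 : ⟪δy t • k, PL e⟫ = ⟪e, PL (δy t • k)⟫ := by
      rw [hself, real_inner_comm]
    have c2 : ⟪θ • (ψ (y t) - ψ (ybarj t)), PL e⟫
        = ⟪e, PL (θ • (ψ (y t) - ψ (ybarj t)))⟫ := by
      rw [hself, real_inner_comm]
    have c3 : ⟪AcL (δξ t), PL e⟫ = ⟪e, PL (AcL (δξ t))⟫ := by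
      rw [hself, real_inner_comm]
    have c4 : ⟪θ • AcL (δζ t), PL e⟫ = ⟪e, PL (θ • AcL (δζ t))⟫ := by
      rw [hself, real_inner_comm]
    rw [c1, c2, c3, c4]
    ring
  rw [hexp, hkey]
  have hsum : σ * ‖e‖ ^ 2 + ‖PL‖ ^ 2 * (γty * ‖k‖) ^ 2 / σ
      + (σ * ‖e‖ ^ 2 + ‖PL‖ ^ 2 * (θbar * (L * γty)) ^ 2 / σ)
      + (σ * ‖e‖ ^ 2 + ‖PL‖ ^ 2 * (‖AcL‖ * γξ) ^ 2 / σ)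
      + (σ * ‖e‖ ^ 2 + ‖PL‖ ^ 2 * (θbar * (‖AcL‖ * γζ)) ^ 2 / σ)
      = 4 * σ * ‖e‖ ^ 2
        + ‖PL‖ ^ 2 * ((‖k‖ ^ 2 + θbar ^ 2 * L ^ 2) * γty ^ 2
            + (γξ ^ 2 + θbar ^ 2 * γζ ^ 2) * ‖AcL‖ ^ 2) / σ := by
    ring
  linarith [y1, y2, y3, y4, hsum]
end

section
/- Let V_ζ = ζᵀPζ where ζ' = A_c·ζ(t_j) + ψ(ȳⱼ) on [t_j, t_{j+1}), A_c Hurwitz with PA_c + A_cᵀP = -I, ψ L-Lipschitz with ‖ψ(a) - ψ(b)‖ ≤ L|a - b|, |y - ȳⱼ| ≤ γ̃_y, and ‖ζ - ζ(t_j)‖ ≤ γ_ζ on the interval. Then for any σ ∈ (0, 1/3), V_ζ' ≤ -(1 - 3σ)‖ζ‖² + a_ζ·y² + d_ζ, where a_ζ = ‖P‖²L²/σ and d_ζ = ‖P‖²(Lγ̃_y + ‖ψ(0)‖)²/σ + ‖P‖²‖A_c‖²γ_ζ²/σ. -/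
open scoped RealInnerProductSpace
set_option maxHeartbeats 800000

/-- Young's inequality helper: `2ab ≤ σa² + b²/σ`. -/
lemma young_aux {σ a b : ℝ} (hσ : 0 < σ) : 2 * a * b ≤ σ * a ^ 2 + b ^ 2 / σ := by
  have h : (σ * a ^ 2 + b ^ 2 / σ) - 2 * a * b = (σ * a - b) ^ 2 / σ := by
    field_simp; ring
  nlinarith [div_nonneg (sq_nonneg (σ * a - b)) hσ.le]

/-- Estimate (eq. 42) for the filter state `ζ` of the state estimator:
`V_ζ' ≤ -(1 - 3σ)‖ζ‖² + a_ζ y² + d_ζ`. -/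
theorem stmt_19 (n : ℕ) (Ac P : Matrix (Fin n) (Fin n) ℝ)
    (AcL PL : EuclideanSpace ℝ (Fin n) →L[ℝ] EuclideanSpace ℝ (Fin n))
    (hAcL : AcL = Matrix.toEuclideanCLM (𝕜 := ℝ) Ac)
    (hPL : PL = Matrix.toEuclideanCLM (𝕜 := ℝ) P)
    (hHurwitz : ∀ μ ∈ spectrum ℂ (Ac.map Complex.ofReal), μ.re < 0)
    (hPsymm : P.IsSymm) (hP : P.PosDef)
    (hLyap : P * Ac + Ac.transpose * P = -1)
    (ψ : ℝ → EuclideanSpace ℝ (Fin n)) (L : ℝ)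
    (hLip : ∀ a b : ℝ, ‖ψ a - ψ b‖ ≤ L * |a - b|)
    (ζ : ℝ → EuclideanSpace ℝ (Fin n)) (y : ℝ → ℝ) (ybarj : ℝ)
    (tj tj1 γty γζ σ : ℝ) (htj : tj < tj1) (hσ : 0 < σ) (hσ3 : σ < 1 / 3)
    (hy : ∀ t ∈ Set.Ico tj tj1, |y t - ybarj| ≤ γty)
    (hsamp : ∀ t ∈ Set.Ico tj tj1, ‖ζ t - ζ tj‖ ≤ γζ)
    (hode : ∀ t ∈ Set.Ico tj tj1, HasDerivAt ζ (AcL (ζ tj) + ψ ybarj) t) :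
    ∀ t ∈ Set.Ico tj tj1, deriv (fun s => ⟪ζ s, PL (ζ s)⟫) t ≤
      -(1 - 3 * σ) * ‖ζ t‖ ^ 2 + (‖PL‖ ^ 2 * L ^ 2 / σ) * (y t) ^ 2
        + (‖PL‖ ^ 2 * (L * γty + ‖ψ 0‖) ^ 2 / σ
            + ‖PL‖ ^ 2 * ‖AcL‖ ^ 2 * γζ ^ 2 / σ) := by
  intro t ht
  set v : EuclideanSpace ℝ (Fin n) := AcL (ζ tj) + ψ ybarj with hv
  -- P is self-adjoint as a CLM
  have hPsa : ∀ x w : EuclideanSpace ℝ (Fin n), ⟪w, PL x⟫ = ⟪PL w, x⟫ := by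
    intro x w
    conv_rhs => rw [hPL]
    rw [← ContinuousLinearMap.adjoint_inner_left, ← ContinuousLinearMap.star_eq_adjoint,
      hPL, ← map_star, Matrix.star_eq_conjTranspose, hP.1]
  -- derivative of V
  have hder : HasDerivAt (fun s => ⟪ζ s, PL (ζ s)⟫) (2 * ⟪ζ t, PL v⟫) t := by
    have h1 : HasDerivAt (fun s => PL (ζ s)) (PL v) t :=
      PL.hasFDerivAt.comp_hasDerivAt t (hode t ht)
    have h2 := HasDerivAt.inner (𝕜 := ℝ) (hode t ht) h1
    have : ⟪ζ t, PL v⟫ + ⟪v, PL (ζ t)⟫ = 2 * ⟪ζ t, PL v⟫ := by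
      rw [hPsa, real_inner_comm]; ring
    rwa [this] at h2
  rw [hder.deriv]
  -- decompose v
  set z := ζ t with hz
  set w := ζ tj - ζ t with hw
  have hvdec : v = AcL z + (AcL w + ψ ybarj) := by
    rw [hv, hw]; rw [map_sub]; abel
  have hsplit : 2 * ⟪z, PL v⟫
      = 2 * ⟪z, PL (AcL z)⟫ + 2 * ⟪z, PL (AcL w)⟫ + 2 * ⟪z, PL (ψ ybarj)⟫ := by
    rw [hvdec, map_add, map_add, inner_add_right, inner_add_right]; ring
  -- Lyapunov identity: 2⟪z, P A z⟫ = -‖z‖²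
  have hlyap2 : 2 * ⟪z, PL (AcL z)⟫ = -‖z‖ ^ 2 := by
    have e1 : PL (AcL z) = Matrix.toEuclideanCLM (𝕜 := ℝ) (P * Ac) z := by
      rw [map_mul, hPL, hAcL]; rfl
    have e2 : ⟪z, Matrix.toEuclideanCLM (𝕜 := ℝ) (Ac.transpose * P) z⟫
        = ⟪z, Matrix.toEuclideanCLM (𝕜 := ℝ) (P * Ac) z⟫ := by
      have : (Ac.transpose * P) = (P * Ac).transpose := by
        rw [Matrix.transpose_mul, hPsymm]
      rw [this, real_inner_comm, ← Matrix.conjTranspose_eq_transpose_of_trivial,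
        ← Matrix.star_eq_conjTranspose, map_star, ContinuousLinearMap.star_eq_adjoint,
        ContinuousLinearMap.adjoint_inner_left, real_inner_comm]
    have e3 : ⟪z, Matrix.toEuclideanCLM (𝕜 := ℝ) (P * Ac) z⟫
        + ⟪z, Matrix.toEuclideanCLM (𝕜 := ℝ) (Ac.transpose * P) z⟫
        = -‖z‖ ^ 2 := by
      rw [← inner_add_right, ← ContinuousLinearMap.add_apply, ← map_add, hLyap, map_neg, map_one,
        ContinuousLinearMap.neg_apply, ContinuousLinearMap.one_apply,
        inner_neg_right, real_inner_self_eq_norm_sq]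
    rw [e1]; linarith [e2, e3]
  -- bounds on the cross terms
  have hnz : (0:ℝ) ≤ ‖z‖ := norm_nonneg _
  have hL : (0:ℝ) ≤ L := by have := hLip 0 1; simp at this; linarith [norm_nonneg (ψ 0 - ψ 1)]
  have hγty : (0:ℝ) ≤ γty := le_trans (abs_nonneg _) (hy t ht)
  -- term 2 : sampling error
  have hb2 : ⟪z, PL (AcL w)⟫ ≤ ‖z‖ * (‖PL‖ * ‖AcL‖ * γζ) := by
    calc ⟪z, PL (AcL w)⟫ ≤ ‖z‖ * ‖PL (AcL w)‖ := real_inner_le_norm _ _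
      _ ≤ ‖z‖ * (‖PL‖ * ‖AcL‖ * γζ) := by
          apply mul_le_mul_of_nonneg_left _ hnz
          calc ‖PL (AcL w)‖ ≤ ‖PL‖ * ‖AcL w‖ := PL.le_opNorm _
            _ ≤ ‖PL‖ * (‖AcL‖ * ‖w‖) :=
                mul_le_mul_of_nonneg_left (AcL.le_opNorm w) (norm_nonneg _)
            _ ≤ ‖PL‖ * (‖AcL‖ * γζ) := by
                have hwγ : ‖w‖ ≤ γζ := by rw [hw, norm_sub_rev]; exact hsamp t ht
                exact mul_le_mul_of_nonneg_left
                  (mul_le_mul_of_nonneg_left hwγ (norm_nonneg _)) (norm_nonneg _)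
            _ = ‖PL‖ * ‖AcL‖ * γζ := by ring
  -- term 3 : ψ bound
  have hψ : ‖ψ ybarj‖ ≤ L * |y t| + (L * γty + ‖ψ 0‖) := by
    have h1 : ‖ψ ybarj - ψ (y t)‖ ≤ L * γty := by
      calc ‖ψ ybarj - ψ (y t)‖ ≤ L * |ybarj - y t| := hLip _ _
        _ ≤ L * γty := by
            rw [abs_sub_comm]; exact mul_le_mul_of_nonneg_left (hy t ht) hL
    have h2 : ‖ψ (y t) - ψ 0‖ ≤ L * |y t| := by simpa using hLip (y t) 0
    calc ‖ψ ybarj‖ = ‖(ψ ybarj - ψ (y t)) + (ψ (y t) - ψ 0) + ψ 0‖ := by congr 1; abel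
      _ ≤ ‖(ψ ybarj - ψ (y t)) + (ψ (y t) - ψ 0)‖ + ‖ψ 0‖ := norm_add_le _ _
      _ ≤ ‖ψ ybarj - ψ (y t)‖ + ‖ψ (y t) - ψ 0‖ + ‖ψ 0‖ := by
          linarith [norm_add_le (ψ ybarj - ψ (y t)) (ψ (y t) - ψ 0)]
      _ ≤ L * |y t| + (L * γty + ‖ψ 0‖) := by linarith
  have hb3 : ⟪z, PL (ψ ybarj)⟫ ≤ ‖z‖ * (‖PL‖ * L * |y t|) + ‖z‖ * (‖PL‖ * (L * γty + ‖ψ 0‖)) := by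
    calc ⟪z, PL (ψ ybarj)⟫ ≤ ‖z‖ * ‖PL (ψ ybarj)‖ := real_inner_le_norm _ _
      _ ≤ ‖z‖ * (‖PL‖ * (L * |y t| + (L * γty + ‖ψ 0‖))) := by
          apply mul_le_mul_of_nonneg_left _ hnz
          calc ‖PL (ψ ybarj)‖ ≤ ‖PL‖ * ‖ψ ybarj‖ := PL.le_opNorm _
            _ ≤ ‖PL‖ * (L * |y t| + (L * γty + ‖ψ 0‖)) :=
                mul_le_mul_of_nonneg_left hψ (norm_nonneg _)
      _ = ‖z‖ * (‖PL‖ * L * |y t|) + ‖z‖ * (‖PL‖ * (L * γty + ‖ψ 0‖)) := by ring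
  -- Young's inequalities
  have hy1 : 2 * ‖z‖ * (‖PL‖ * L * |y t|) ≤ σ * ‖z‖ ^ 2 + (‖PL‖ * L * |y t|) ^ 2 / σ :=
    young_aux hσ
  have hy2 : 2 * ‖z‖ * (‖PL‖ * (L * γty + ‖ψ 0‖)) ≤
      σ * ‖z‖ ^ 2 + (‖PL‖ * (L * γty + ‖ψ 0‖)) ^ 2 / σ := young_aux hσ
  have hy3 : 2 * ‖z‖ * (‖PL‖ * ‖AcL‖ * γζ) ≤ σ * ‖z‖ ^ 2 + (‖PL‖ * ‖AcL‖ * γζ) ^ 2 / σ :=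
    young_aux hσ
  have habs : |y t| ^ 2 = (y t) ^ 2 := sq_abs _
  rw [hsplit, hlyap2]
  have e1 : (‖PL‖ * L * |y t|) ^ 2 / σ = (‖PL‖ ^ 2 * L ^ 2 / σ) * (y t) ^ 2 := by
    rw [mul_pow, mul_pow, habs]; ring
  have e2 : (‖PL‖ * (L * γty + ‖ψ 0‖)) ^ 2 / σ = ‖PL‖ ^ 2 * (L * γty + ‖ψ 0‖) ^ 2 / σ := by
    rw [mul_pow]
  have e3 : (‖PL‖ * ‖AcL‖ * γζ) ^ 2 / σ = ‖PL‖ ^ 2 * ‖AcL‖ ^ 2 * γζ ^ 2 / σ := by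
    rw [mul_pow, mul_pow]
  rw [e1] at hy1; rw [e2] at hy2; rw [e3] at hy3
  linarith [hb2, hb3, hy1, hy2, hy3]
end
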